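/- Let 0 < δ < 1, let i ≥ 0, and let J^(i) = {j ∈ J : δ^{−i} ≤ b_j < δ^{−(i+1)}} be the jobs whose bottleneck capacity lies in [δ^{−i}, δ^{−(i+1)}). Then for every feasible round S ⊆ J and every edge e_k, the total demand of the jobs of S ∩ J^(i) using e_k is at most 2δ^{−(i+1)}. (Hence for packing J^(i) one may assume every edge capacity lies in the range [δ^{−i}, 2δ^{−(i+1)}).) -/
import Mathlib


open scoped Classical

namespace PathUFP

variable {ι : Type*}

/-- Job `i` uses the edge `e_{k+1}` (for `k : Fin m`, edges being 1-indexed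
`e_1, …, e_m`) iff `s_i < k + 1 ≤ t_i`, i.e. iff `s_i ≤ k < t_i`. -/
def uses (s t : ι → ℕ) {m : ℕ} (i : ι) (k : Fin m) : Prop :=
  s i ≤ (k : ℕ) ∧ (k : ℕ) < t i

/-- The bottleneck capacity `b_i = min {c_k : i uses e_k}` of job `i` lies in the
interval `[δ^{-lvl}, δ^{-(lvl+1)})`, i.e. `i ∈ J^(lvl)`: every edge used by `i` has
capacity at least `δ^{-lvl}`, and some edge used by `i` has capacity less than
`δ^{-(lvl+1)}`. -/
def LevelMem (s t : ι → ℕ) {m : ℕ} (c : Fin m → ℝ) (δ : ℝ) (lvl : ℕ) (i : ι) : Prop :=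
  (∀ k : Fin m, uses s t i k → δ ^ (-(lvl : ℤ)) ≤ c k) ∧
  (∃ k : Fin m, uses s t i k ∧ c k < δ ^ (-((lvl : ℤ) + 1)))

end PathUFP

open PathUFP in
/-- Let `0 < δ < 1`, let `lvl ≥ 0`, and let
`J^(lvl) = {j ∈ J : δ^{−lvl} ≤ b_j < δ^{−(lvl+1)}}` be the jobs whose bottleneck
capacity lies in `[δ^{−lvl}, δ^{−(lvl+1)})`. Then for every feasible round `S ⊆ J` and
every edge `e_k`, the total demand of the jobs of `S ∩ J^(lvl)` using `e_k` is at most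
`2 δ^{−(lvl+1)}`. -/
theorem level_demand_bound {ι : Type*} [Fintype ι] {m : ℕ}
    (c : Fin m → ℝ) (hc : ∀ k, 0 < c k)
    (s t : ι → ℕ) (d : ι → ℝ)
    (hst : ∀ i, s i < t i) (htm : ∀ i, t i ≤ m) (hd : ∀ i, 0 < d i)
    (δ : ℝ) (hδ0 : 0 < δ) (hδ1 : δ < 1) (lvl : ℕ)
    (S : Finset ι)
    (hS : ∀ k : Fin m, (∑ i ∈ S, if uses s t i k then d i else 0) ≤ c k)
    (k : Fin m) :
    (∑ i ∈ S, if LevelMem s t c δ lvl i ∧ uses s t i k then d i else 0)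
      ≤ 2 * δ ^ (-((lvl : ℤ) + 1)) := by
  classical
  set B : ℝ := δ ^ (-((lvl : ℤ) + 1)) with hB
  have hBpos : 0 < B := zpow_pos hδ0 _
  have hd0 : ∀ i, 0 ≤ d i := fun i => (hd i).le
  rw [← Finset.sum_filter]
  set T := S.filter (fun i => LevelMem s t c δ lvl i ∧ uses s t i k) with hTdef
  have hTmem : ∀ i ∈ T, i ∈ S ∧ LevelMem s t c δ lvl i ∧ uses s t i k := by
    intro i hi; simpa [hTdef] using (Finset.mem_filter.mp hi)
  set PA : ι → Prop := fun i => ∃ k' : Fin m, uses s t i k' ∧ c k' < B ∧ (k' : ℕ) ≤ (k : ℕ)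
    with hPA
  have key : ∀ (U : Finset ι), U ⊆ T →
      (∀ i ∈ U, ∃ k' : Fin m, uses s t i k' ∧ c k' < B) →
      (∃ k0 : Fin m, c k0 < B ∧ ∀ i ∈ U, uses s t i k0) →
      ∑ i ∈ U, d i ≤ B := by
    intro U hUT _ ⟨k0, hk0B, hall⟩
    have h1 : ∑ i ∈ U, d i ≤ ∑ i ∈ S.filter (fun i => uses s t i k0), d i := by
      apply Finset.sum_le_sum_of_subset_of_nonneg
      · intro i hi
        exact Finset.mem_filter.mpr ⟨(hTmem i (hUT hi)).1, hall i hi⟩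
      · intro i _ _; exact hd0 i
    calc ∑ i ∈ U, d i ≤ _ := h1
      _ = ∑ i ∈ S, if uses s t i k0 then d i else 0 := (Finset.sum_filter _ _)
      _ ≤ c k0 := hS k0
      _ ≤ B := hk0B.le
  -- split
  have hsplit := (Finset.sum_filter_add_sum_filter_not T PA d).symm
  rw [hsplit]
  have hA : ∑ i ∈ T.filter PA, d i ≤ B := by
    rcases (T.filter PA).eq_empty_or_nonempty with he | hne
    · rw [he, Finset.sum_empty]; exact hBpos.le
    · set E := Finset.univ.filter
        (fun k' : Fin m => (∃ i ∈ T.filter PA, uses s t i k') ∧ c k' < B ∧ (k' : ℕ) ≤ (k : ℕ))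
        with hEdef
      have hEne : E.Nonempty := by
        obtain ⟨i, hi⟩ := hne
        obtain ⟨k', hu, hcB, hle⟩ := (Finset.mem_filter.mp hi).2
        exact ⟨k', Finset.mem_filter.mpr ⟨Finset.mem_univ _, ⟨i, hi, hu⟩, hcB, hle⟩⟩
      set k0 := E.max' hEne with hk0
      have hk0E := E.max'_mem hEne
      obtain ⟨-, hk0B, hk0le⟩ := (Finset.mem_filter.mp hk0E).2
      apply key _ (Finset.filter_subset _ _)
      · intro i hi
        obtain ⟨k', hu, hcB, _⟩ := (Finset.mem_filter.mp hi).2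
        exact ⟨k', hu, hcB⟩
      · refine ⟨k0, hk0B, fun i hi => ?_⟩
        obtain ⟨k', hu, hcB, hle⟩ := (Finset.mem_filter.mp hi).2
        have hk'E : k' ∈ E := Finset.mem_filter.mpr
          ⟨Finset.mem_univ _, ⟨i, hi, hu⟩, hcB, hle⟩
        have hle0 : k' ≤ k0 := E.le_max' _ hk'E
        have hik : uses s t i k := (hTmem i (Finset.filter_subset _ _ hi)).2.2
        exact ⟨le_trans hu.1 hle0, lt_of_le_of_lt hk0le hik.2⟩
  have hB' : ∑ i ∈ T.filter (fun i => ¬ PA i), d i ≤ B := by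
    rcases (T.filter (fun i => ¬ PA i)).eq_empty_or_nonempty with he | hne
    · rw [he, Finset.sum_empty]; exact hBpos.le
    · have hcheap : ∀ i ∈ T.filter (fun i => ¬ PA i),
          ∃ k' : Fin m, uses s t i k' ∧ c k' < B ∧ (k : ℕ) < (k' : ℕ) := by
        intro i hi
        have hnPA := (Finset.mem_filter.mp hi).2
        obtain ⟨k', hu, hcB⟩ := (hTmem i (Finset.filter_subset _ _ hi)).2.1.2
        refine ⟨k', hu, hcB, ?_⟩
        by_contra h
        exact hnPA ⟨k', hu, hcB, not_lt.mp h⟩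
      set E := Finset.univ.filter
        (fun k' : Fin m => (∃ i ∈ T.filter (fun i => ¬ PA i), uses s t i k') ∧ c k' < B ∧ (k : ℕ) < (k' : ℕ))
        with hEdef
      have hEne : E.Nonempty := by
        obtain ⟨i, hi⟩ := hne
        obtain ⟨k', hu, hcB, hlt⟩ := hcheap i hi
        exact ⟨k', Finset.mem_filter.mpr ⟨Finset.mem_univ _, ⟨i, hi, hu⟩, hcB, hlt⟩⟩
      set k0 := E.min' hEne with hk0
      have hk0E := E.min'_mem hEne
      obtain ⟨-, hk0B, hk0gt⟩ := (Finset.mem_filter.mp hk0E).2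
      apply key _ (Finset.filter_subset _ _)
      · intro i hi
        obtain ⟨k', hu, hcB, _⟩ := hcheap i hi
        exact ⟨k', hu, hcB⟩
      · refine ⟨k0, hk0B, fun i hi => ?_⟩
        obtain ⟨k', hu, hcB, hlt⟩ := hcheap i hi
        have hk'E : k' ∈ E := Finset.mem_filter.mpr
          ⟨Finset.mem_univ _, ⟨i, hi, hu⟩, hcB, hlt⟩
        have hge : k0 ≤ k' := E.min'_le _ hk'E
        have hik : uses s t i k := (hTmem i (Finset.filter_subset _ _ hi)).2.2
        exact ⟨le_trans hik.1 (le_of_lt hk0gt), lt_of_le_of_lt hge hu.2⟩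
  linarith
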